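/- Let n ≥ 1 and let M_Z^n be the normed space on H = {x ∈ ℝ^{n+1} : Σᵢ x(i) = 0} with norm ‖x‖_Z = ½(maxᵢ x(i) − minᵢ x(i)). The largest cardinality of a set of unit vectors in M_Z^n that are at pairwise distance 2 is C(n+1, ⌊(n+1)/2⌋); that is, the maximum size of a set S ⊆ H with ‖p‖_Z = 1 for all p ∈ S and ‖p − q‖_Z = 2 for all distinct p, q ∈ S equals C(n+1, ⌊(n+1)/2⌋). -/

import Mathlib

/-!
A family of unit vectors at pairwise distance `2` is an antichain in disguise: if
`‖p - q‖_Z = ‖p‖_Z + ‖q‖_Z`, some coordinate is simultaneously maximal for `p` and minimal for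
`q`, so the set of coordinates where `p` is maximal is not contained in the one for `q`. Sperner's
theorem then bounds the family by `C(n+1, ⌊(n+1)/2⌋)`. Conversely, the vectors `2·𝟙_A - 2k/(n+1)`
for the `k`-subsets `A` with `k = ⌊(n+1)/2⌋` lie in `H`, have norm `1` and are at pairwise
distance `2`.
-/

/-- The norm of the space `M_Z^n`: `‖x‖_Z = ½(maxᵢ x(i) − minᵢ x(i))`. -/
noncomputable def normZ {n : ℕ} (x : Fin (n + 1) → ℝ) : ℝ :=
  (Finset.univ.sup' Finset.univ_nonempty x - Finset.univ.inf' Finset.univ_nonempty x) / 2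

open Finset

namespace NormZ

variable {n : ℕ}

noncomputable def coordMax (x : Fin (n + 1) → ℝ) : ℝ := univ.sup' univ_nonempty x

noncomputable def coordMin (x : Fin (n + 1) → ℝ) : ℝ := univ.inf' univ_nonempty x

noncomputable def coordArgmax (x : Fin (n + 1) → ℝ) : Finset (Fin (n + 1)) :=
  {i | x i = coordMax x}

variable {x p q : Fin (n + 1) → ℝ} {c : ℝ}

theorem normZ_eq (x : Fin (n + 1) → ℝ) : normZ x = (coordMax x - coordMin x) / 2 := rfl

theorem le_coordMax (x : Fin (n + 1) → ℝ) (i : Fin (n + 1)) : x i ≤ coordMax x :=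
  le_sup' x (mem_univ i)

theorem coordMin_le (x : Fin (n + 1) → ℝ) (i : Fin (n + 1)) : coordMin x ≤ x i :=
  inf'_le x (mem_univ i)

theorem le_coordMin (h : ∀ i, c ≤ x i) : c ≤ coordMin x :=
  le_inf' _ _ fun i _ => h i

theorem exists_eq_coordMax (x : Fin (n + 1) → ℝ) : ∃ i, x i = coordMax x := by
  obtain ⟨i, -, hi⟩ := exists_mem_eq_sup' univ_nonempty x
  exact ⟨i, hi.symm⟩

theorem coordMax_eq_of_forall_le (h : ∀ i, x i ≤ c) (hc : ∃ i, x i = c) : coordMax x = c := by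
  obtain ⟨i, rfl⟩ := hc
  exact le_antisymm (sup'_le _ _ fun j _ => h j) (le_coordMax x i)

theorem coordMin_eq_of_forall_le (h : ∀ i, c ≤ x i) (hc : ∃ i, x i = c) : coordMin x = c := by
  obtain ⟨i, rfl⟩ := hc
  exact le_antisymm (coordMin_le x i) (le_coordMin h)

theorem normZ_eq_of_forall_mem_Icc {lo hi : ℝ} (h : ∀ i, x i ∈ Set.Icc lo hi)
    (hlo : ∃ i, x i = lo) (hhi : ∃ i, x i = hi) : normZ x = (hi - lo) / 2 := by
  rw [normZ_eq, coordMax_eq_of_forall_le (fun i => (h i).2) hhi,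
    coordMin_eq_of_forall_le (fun i => (h i).1) hlo]

theorem exists_eq_coordMax_and_eq_coordMin (h : normZ p + normZ q ≤ normZ (p - q)) :
    ∃ i, p i = coordMax p ∧ q i = coordMin q := by
  obtain ⟨i, hi⟩ := exists_eq_coordMax (p - q)
  have hmin : coordMin p - coordMax q ≤ coordMin (p - q) :=
    le_coordMin fun j => by
      have := coordMin_le p j; have := le_coordMax q j
      simp only [Pi.sub_apply]; linarith
  simp only [normZ_eq, Pi.sub_apply] at h hi
  have := le_coordMax p i; have := coordMin_le q i
  exact ⟨i, by linarith, by linarith⟩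

theorem not_coordArgmax_subset (hq : 0 < normZ q) (h : normZ p + normZ q ≤ normZ (p - q)) :
    ¬ coordArgmax p ⊆ coordArgmax q := by
  obtain ⟨i, hpi, hqi⟩ := exists_eq_coordMax_and_eq_coordMin h
  intro hsub
  have hi : q i = coordMax q := by simpa [coordArgmax] using hsub (by simpa [coordArgmax] using hpi)
  rw [normZ_eq] at hq
  linarith

theorem card_le_choose_of_pairwise_normZ_sub (S : Finset (Fin (n + 1) → ℝ))
    (hnorm : ∀ p ∈ S, normZ p = 1) (hdist : ∀ p ∈ S, ∀ q ∈ S, p ≠ q → normZ (p - q) = 2) :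
    #S ≤ (n + 1).choose ((n + 1) / 2) := by
  have hsep : ∀ p ∈ S, ∀ q ∈ S, p ≠ q → ¬ coordArgmax p ⊆ coordArgmax q := fun p hp q hq hpq =>
    not_coordArgmax_subset (by rw [hnorm q hq]; norm_num)
      (by rw [hnorm p hp, hnorm q hq, hdist p hp q hq hpq]; norm_num)
  have hinj : Set.InjOn coordArgmax S := fun p hp q hq hpq =>
    by_contra fun hne => hsep p hp q hq hne hpq.subset
  have hanti : IsAntichain (· ⊆ ·) (SetLike.coe (S.image coordArgmax)) := by
    rintro _ hA _ hB hAB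
    obtain ⟨p, hp, rfl⟩ := mem_image.mp hA
    obtain ⟨q, hq, rfl⟩ := mem_image.mp hB
    exact hsep p hp q hq (fun hpq => hAB (hpq ▸ rfl))
  simpa [card_image_of_injOn hinj] using hanti.sperner

noncomputable def layerVector (k : ℕ) (A : Finset (Fin (n + 1))) : Fin (n + 1) → ℝ :=
  fun i => (if i ∈ A then 2 else 0) - 2 * k / (n + 1)

theorem sum_layerVector {k : ℕ} {A : Finset (Fin (n + 1))} (hA : #A = k) :
    ∑ i, layerVector k A i = 0 := by
  simp only [layerVector, sum_sub_distrib, sum_ite_mem, univ_inter, sum_const, card_univ,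
    Fintype.card_fin, hA, nsmul_eq_mul]
  push_cast
  field_simp
  ring

theorem normZ_layerVector (k : ℕ) {A : Finset (Fin (n + 1))} (hA : 0 < #A)
    (hA' : #A < n + 1) : normZ (layerVector k A) = 1 := by
  obtain ⟨i, hi⟩ := card_pos.mp hA
  obtain ⟨j, -, hj⟩ := exists_mem_notMem_of_card_lt_card (s := A) (t := univ) (by simpa using hA')
  rw [normZ_eq_of_forall_mem_Icc (lo := -(2 * k / (n + 1))) (hi := 2 - 2 * k / (n + 1))]
  · ring
  · intro l
    by_cases hl : l ∈ A <;> simp [layerVector, hl]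
  · exact ⟨j, by simp [layerVector, hj]⟩
  · exact ⟨i, by simp [layerVector, hi]⟩

theorem layerVector_sub_apply (k : ℕ) (A B : Finset (Fin (n + 1))) (i : Fin (n + 1)) :
    (layerVector k A - layerVector k B) i =
      (if i ∈ A then 2 else 0) - (if i ∈ B then 2 else 0) := by
  simp only [Pi.sub_apply, layerVector]
  ring

theorem normZ_layerVector_sub (k : ℕ) {A B : Finset (Fin (n + 1))} (hAB : ¬ A ⊆ B)
    (hBA : ¬ B ⊆ A) : normZ (layerVector k A - layerVector k B) = 2 := by
  obtain ⟨i, hiA, hiB⟩ := not_subset.mp hAB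
  obtain ⟨j, hjB, hjA⟩ := not_subset.mp hBA
  rw [normZ_eq_of_forall_mem_Icc (lo := -2) (hi := 2)]
  · norm_num
  · intro l
    rw [layerVector_sub_apply]
    by_cases hlA : l ∈ A <;> by_cases hlB : l ∈ B <;> norm_num [hlA, hlB]
  · exact ⟨j, by rw [layerVector_sub_apply]; simp [hjA, hjB]⟩
  · exact ⟨i, by rw [layerVector_sub_apply]; simp [hiA, hiB]⟩

theorem layerVector_injective (k : ℕ) : Function.Injective (layerVector (n := n) k) := by
  intro A B hAB
  ext i
  have := layerVector_sub_apply k A B i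
  rw [hAB, sub_self] at this
  by_cases hA : i ∈ A <;> by_cases hB : i ∈ B <;> simp_all

end NormZ

open NormZ in
/-- The largest number of unit vectors in `M_Z^n` at pairwise distance `2` equals the
binomial coefficient `C(n+1, ⌊(n+1)/2⌋)`. -/
theorem max_unit_vectors_pairwise_distance_two (n : ℕ) (hn : 1 ≤ n) :
    IsGreatest {c : ℕ | ∃ S : Finset (Fin (n + 1) → ℝ), S.card = c ∧
        (∀ p ∈ S, ∑ i, p i = 0) ∧ (∀ p ∈ S, normZ p = 1) ∧
        (∀ p ∈ S, ∀ q ∈ S, p ≠ q → normZ (p - q) = 2)}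
      (Nat.choose (n + 1) ((n + 1) / 2)) := by
  refine ⟨?_, fun c ⟨S, hcard, _, hnorm, hdist⟩ =>
    hcard ▸ card_le_choose_of_pairwise_normZ_sub S hnorm hdist⟩
  set k := (n + 1) / 2
  let 𝒜 : Finset (Finset (Fin (n + 1))) := powersetCard k univ
  have hsized : ∀ A ∈ 𝒜, #A = k := fun A hA => (mem_powersetCard.mp hA).2
  have hanti := (Set.sized_powersetCard (univ : Finset (Fin (n + 1))) k).isAntichain
  refine ⟨𝒜.map ⟨layerVector k, layerVector_injective k⟩, by simp [𝒜], ?_, ?_, ?_⟩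
  · simp only [mem_map, Function.Embedding.coeFn_mk, forall_exists_index, and_imp]
    rintro _ A hA rfl
    exact sum_layerVector (hsized A hA)
  · simp only [mem_map, Function.Embedding.coeFn_mk, forall_exists_index, and_imp]
    rintro _ A hA rfl
    have := hsized A hA
    exact normZ_layerVector k (by omega) (by omega)
  · simp only [mem_map, Function.Embedding.coeFn_mk, forall_exists_index, and_imp, ne_eq]
    rintro _ A hA rfl _ B hB rfl hAB
    have hne : A ≠ B := fun h => hAB (h ▸ rfl)
    exact normZ_layerVector_sub k (hanti hA hB hne) (hanti hB hA (Ne.symm hne))
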